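/- Suppose $(\varphi_n)_{n=1}^{N}$ are real numbers whose gaps $\delta_n = \varphi_{n+1}-\varphi_n$ for $n=1,\dots,N-1$ are increasing ($\delta_n \ge \delta_{n-1}$) and each satisfies $\delta_n \in [\lambda, 2\pi - \lambda]$ for some $\lambda \in (0,\pi]$. Then $\left|\sum_{n=1}^{N} e^{i\varphi_n}\right| \le \cot(\lambda/4)$. -/

import Mathlib

/-!
With `δₙ = φₙ₊₁ - φₙ` and `gₙ = (e^{iδₙ} - 1)⁻¹ = -1/2 - (i/2) cot (δₙ/2)`, every term satisfies
`e^{iφₙ} = (e^{iφₙ₊₁} - e^{iφₙ}) gₙ`. Summation by parts leaves two boundary terms of modulus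
`1 / (2 sin (δ/2))` plus `∑ |gₙ - gₙ₊₁| = ∑ (cot (δₙ/2) - cot (δₙ₊₁/2)) / 2`, which telescopes
because the gaps increase. Half-angle identities collapse the total to
`(cot (δ₁/4) + tan (δ_{N-1}/4)) / 2`, and both terms are at most `cot (λ/4)`.
-/

open Complex Finset
open scoped Real

namespace Real

theorem cot_eq_tan_pi_div_two_sub (x : ℝ) : cot x = tan (π / 2 - x) := by
  rw [tan_pi_div_two_sub, tan_inv_eq_cot]

theorem cot_le_cot_of_le {a b : ℝ} (ha : 0 < a) (hab : a ≤ b) (hb : b < π) :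
    cot b ≤ cot a := by
  rw [cot_eq_tan_pi_div_two_sub, cot_eq_tan_pi_div_two_sub]
  exact strictMonoOn_tan.monotoneOn ⟨by linarith, by linarith⟩ ⟨by linarith, by linarith⟩
    (by linarith)

theorem cot_add_inv_sin {x : ℝ} (hx : sin x ≠ 0) : cot x + (sin x)⁻¹ = cot (x / 2) := by
  have hsin : sin x = 2 * sin (x / 2) * cos (x / 2) := by
    rw [← sin_two_mul, mul_div_cancel₀ _ two_ne_zero]
  have hcos : cos x = 2 * cos (x / 2) ^ 2 - 1 := by
    rw [← cos_two_mul, mul_div_cancel₀ _ two_ne_zero]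
  rw [hsin] at hx ⊢
  have hs : sin (x / 2) ≠ 0 := fun h => hx (by rw [h]; ring)
  have hc : cos (x / 2) ≠ 0 := fun h => hx (by rw [h]; ring)
  rw [cot_eq_cos_div_sin, cot_eq_cos_div_sin, hsin, hcos]
  field_simp
  ring

theorem inv_sin_sub_cot {x : ℝ} (hx : sin x ≠ 0) : (sin x)⁻¹ - cot x = tan (x / 2) := by
  have hsin : sin x = 2 * sin (x / 2) * cos (x / 2) := by
    rw [← sin_two_mul, mul_div_cancel₀ _ two_ne_zero]
  have hcos : cos x = 2 * cos (x / 2) ^ 2 - 1 := by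
    rw [← cos_two_mul, mul_div_cancel₀ _ two_ne_zero]
  rw [hsin] at hx
  have hs : sin (x / 2) ≠ 0 := fun h => hx (by rw [h]; ring)
  have hc : cos (x / 2) ≠ 0 := fun h => hx (by rw [h]; ring)
  rw [cot_eq_cos_div_sin, tan_eq_sin_div_cos, hsin, hcos]
  field_simp
  linear_combination (-2) * sin_sq_add_cos_sq (x / 2)

end Real

namespace Complex

theorem inv_exp_I_mul_sub_one {θ : ℝ} (h : exp (I * θ) ≠ 1) :
    (exp (I * θ) - 1)⁻¹ = -1 / 2 - I / 2 * Real.cot (θ / 2) := by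
  have h1 : exp (I * θ) - 1 ≠ 0 := sub_ne_zero.2 h
  have h2 : 1 - exp (I * θ) ≠ 0 := sub_ne_zero.2 h.symm
  rw [ofReal_cot, cot_eq_exp_ratio]
  push_cast
  rw [show 2 * I * (θ / 2 : ℂ) = I * θ by ring]
  field_simp
  ring

theorem norm_inv_exp_I_mul_sub_one (θ : ℝ) :
    ‖(exp (I * θ) - 1)⁻¹‖ = (2 * |Real.sin (θ / 2)|)⁻¹ := by
  rw [norm_inv, norm_exp_I_mul_ofReal_sub_one, Real.norm_eq_abs, abs_mul, abs_two]

theorem one_add_inv_exp_I_mul_sub_one {θ : ℝ} (h : exp (I * θ) ≠ 1) :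
    1 + (exp (I * θ) - 1)⁻¹ = exp (I * θ) * (exp (I * θ) - 1)⁻¹ := by
  have h1 : exp (I * θ) - 1 ≠ 0 := sub_ne_zero.2 h
  field_simp
  ring

theorem exp_I_mul_ne_one {θ : ℝ} (h : Real.sin (θ / 2) ≠ 0) : exp (I * θ) ≠ 1 := by
  rw [← sub_ne_zero, ← norm_ne_zero_iff, norm_exp_I_mul_ofReal_sub_one]
  simpa using h

theorem exp_I_mul_sub_exp_I_mul_mul_inv {a b : ℝ} (h : exp (I * ↑(b - a)) ≠ 1) :
    (exp (I * b) - exp (I * a)) * (exp (I * ↑(b - a)) - 1)⁻¹ = exp (I * a) := by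
  have hb : exp (I * b) = exp (I * a) * exp (I * ↑(b - a)) := by
    rw [← exp_add]; push_cast; ring_nf
  rw [hb, ← mul_sub_one, mul_assoc, mul_inv_cancel₀ (sub_ne_zero.2 h), mul_one]

theorem norm_inv_exp_I_mul_sub_one_sub_inv {a b : ℝ} (ha : 0 < a) (hab : a ≤ b)
    (hb : b < 2 * π) :
    ‖(exp (I * a) - 1)⁻¹ - (exp (I * b) - 1)⁻¹‖ = (Real.cot (a / 2) - Real.cot (b / 2)) / 2 := by
  have hcot : Real.cot (b / 2) ≤ Real.cot (a / 2) :=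
    Real.cot_le_cot_of_le (by linarith) (by linarith) (by linarith)
  have hsin {θ : ℝ} (h0 : 0 < θ) (h1 : θ < 2 * π) : Real.sin (θ / 2) ≠ 0 :=
    (Real.sin_pos_of_pos_of_lt_pi (by linarith) (by linarith)).ne'
  rw [inv_exp_I_mul_sub_one (exp_I_mul_ne_one (hsin ha (by linarith))),
    inv_exp_I_mul_sub_one (exp_I_mul_ne_one (hsin (by linarith) hb)),
    show -1 / 2 - I / 2 * Real.cot (a / 2) - (-1 / 2 - I / 2 * Real.cot (b / 2))
      = I * ((Real.cot (b / 2) - Real.cot (a / 2)) / 2 : ℝ) by push_cast; ring,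
    norm_mul, norm_I, one_mul, norm_real, Real.norm_eq_abs, abs_of_nonpos (by linarith)]
  ring

end Complex

theorem norm_sum_Icc_sub_boundary_le {E g : ℕ → ℂ} {c : ℕ → ℝ} {M : ℕ} (hM : 1 ≤ M)
    (hE : ∀ n, ‖E n‖ ≤ 1) (hEg : ∀ n, 1 ≤ n → n ≤ M → (E (n + 1) - E n) * g n = E n)
    (hgc : ∀ n, 1 ≤ n → n < M → ‖g n - g (n + 1)‖ ≤ c n - c (n + 1)) :
    ‖∑ n ∈ Icc 1 (M + 1), E n - E (M + 1) * (1 + g M) + E 1 * g 1‖ ≤ c 1 - c M := by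
  induction M, hM using Nat.le_induction with
  | base =>
    have h1 := hEg 1 le_rfl le_rfl
    rw [sum_Icc_succ_top (by norm_num), Icc_self, sum_singleton]
    simp only [show E 1 + E (1 + 1) - E (1 + 1) * (1 + g 1) + E 1 * g 1 = 0 by
      linear_combination -h1, norm_zero, sub_self, le_refl]
  | succ M hM ih =>
    have hstep := hEg (M + 1) (by omega) le_rfl
    calc ‖∑ n ∈ Icc 1 (M + 1 + 1), E n - E (M + 1 + 1) * (1 + g (M + 1)) + E 1 * g 1‖
        = ‖(∑ n ∈ Icc 1 (M + 1), E n - E (M + 1) * (1 + g M) + E 1 * g 1)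
            + E (M + 1) * (g M - g (M + 1))‖ := by
          rw [sum_Icc_succ_top (by omega)]
          congr 1
          linear_combination -hstep
      _ ≤ (c 1 - c M) + 1 * (c M - c (M + 1)) := by
          grw [norm_add_le, norm_mul, hE (M + 1),
            ih (fun n h1 h2 => hEg n h1 (by omega)) (fun n h1 h2 => hgc n h1 (by omega)),
            hgc M hM (by omega)]
      _ = c 1 - c (M + 1) := by ring

theorem norm_sum_Icc_le_of_sub_mul_eq {E g : ℕ → ℂ} {c : ℕ → ℝ} {M : ℕ} (hM : 1 ≤ M)
    (hE : ∀ n, ‖E n‖ ≤ 1) (hEg : ∀ n, 1 ≤ n → n ≤ M → (E (n + 1) - E n) * g n = E n)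
    (hgc : ∀ n, 1 ≤ n → n < M → ‖g n - g (n + 1)‖ ≤ c n - c (n + 1)) :
    ‖∑ n ∈ Icc 1 (M + 1), E n‖ ≤ ‖g 1‖ + ‖1 + g M‖ + (c 1 - c M) := by
  calc ‖∑ n ∈ Icc 1 (M + 1), E n‖
      = ‖(∑ n ∈ Icc 1 (M + 1), E n - E (M + 1) * (1 + g M) + E 1 * g 1)
          - E 1 * g 1 + E (M + 1) * (1 + g M)‖ := by ring_nf
    _ ≤ (c 1 - c M) + 1 * ‖g 1‖ + 1 * ‖1 + g M‖ := by
        grw [norm_add_le, norm_sub_le, norm_mul, norm_mul, hE 1, hE (M + 1),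
          norm_sum_Icc_sub_boundary_le hM hE hEg hgc]
    _ = ‖g 1‖ + ‖1 + g M‖ + (c 1 - c M) := by ring

theorem norm_sum_exp_I_mul_le_of_gap_monotone (φ : ℕ → ℝ) {M : ℕ} (hM : 1 ≤ M)
    (hgap : ∀ n, 1 ≤ n → n ≤ M → 0 < φ (n + 1) - φ n ∧ φ (n + 1) - φ n < 2 * π)
    (hmono : ∀ n, 1 ≤ n → n < M → φ (n + 1) - φ n ≤ φ (n + 2) - φ (n + 1)) :
    ‖∑ n ∈ Icc 1 (M + 1), exp (I * φ n)‖ ≤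
      (Real.cot ((φ 2 - φ 1) / 4) + Real.tan ((φ (M + 1) - φ M) / 4)) / 2 := by
  set δ : ℕ → ℝ := fun n => φ (n + 1) - φ n with hδ
  have hsin : ∀ n, 1 ≤ n → n ≤ M → 0 < Real.sin (δ n / 2) := fun n h1 h2 =>
    Real.sin_pos_of_pos_of_lt_pi (by linarith [hgap n h1 h2]) (by linarith [hgap n h1 h2])
  have hexp : ∀ n, 1 ≤ n → n ≤ M → exp (I * δ n) ≠ 1 := fun n h1 h2 =>
    exp_I_mul_ne_one (hsin n h1 h2).ne'
  have hnorm : ∀ n, 1 ≤ n → n ≤ M → ‖(exp (I * δ n) - 1)⁻¹‖ = (Real.sin (δ n / 2))⁻¹ / 2 :=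
    fun n h1 h2 => by
      rw [norm_inv_exp_I_mul_sub_one, abs_of_pos (hsin n h1 h2), mul_inv]; ring
  refine (norm_sum_Icc_le_of_sub_mul_eq (g := fun n => (exp (I * δ n) - 1)⁻¹)
    (c := fun n => Real.cot (δ n / 2) / 2) hM (fun n => (norm_exp_I_mul_ofReal _).le)
    (fun n h1 h2 => exp_I_mul_sub_exp_I_mul_mul_inv (hexp n h1 h2))
    (fun n h1 h2 => ((norm_inv_exp_I_mul_sub_one_sub_inv (hgap n h1 h2.le).1
      (hmono n h1 h2) (hgap (n + 1) (by omega) h2).2).trans (sub_div _ _ _)).le)).trans_eq ?_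
  have hfirst : Real.cot (δ 1 / 2) + (Real.sin (δ 1 / 2))⁻¹ = Real.cot ((φ 2 - φ 1) / 4) := by
    rw [Real.cot_add_inv_sin (hsin 1 le_rfl hM).ne', div_div]; norm_num [hδ]
  have hlast :
      (Real.sin (δ M / 2))⁻¹ - Real.cot (δ M / 2) = Real.tan ((φ (M + 1) - φ M) / 4) := by
    rw [Real.inv_sin_sub_cot (hsin M hM le_rfl).ne', div_div]; norm_num [hδ]
  rw [one_add_inv_exp_I_mul_sub_one (hexp M hM le_rfl), norm_mul, norm_exp_I_mul_ofReal,
    one_mul, hnorm 1 le_rfl hM, hnorm M hM le_rfl, ← hfirst, ← hlast]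
  ring

theorem one_le_cot_div_four {x : ℝ} (h0 : 0 < x) (hx : x ≤ π) : 1 ≤ Real.cot (x / 4) := by
  rw [Real.cot_eq_tan_pi_div_two_sub, ← Real.tan_pi_div_four]
  exact Real.strictMonoOn_tan.monotoneOn ⟨by linarith, by linarith⟩ ⟨by linarith, by linarith⟩
    (by linarith)

theorem kusmin_landau_general (N : ℕ) (φ : ℕ → ℝ) (lam : ℝ)
    (hlam_pos : 0 < lam) (hlam_le : lam ≤ Real.pi)
    (hmono : ∀ n, 2 ≤ n → n ≤ N - 1 → φ n - φ (n - 1) ≤ φ (n + 1) - φ n)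
    (hgap : ∀ n, 1 ≤ n → n ≤ N - 1 →
      lam ≤ φ (n + 1) - φ n ∧ φ (n + 1) - φ n ≤ 2 * Real.pi - lam) :
    ‖∑ n ∈ Finset.Icc 1 N, Complex.exp (Complex.I * (φ n))‖ ≤
      Real.cot (lam / 4) := by
  have hone := one_le_cot_div_four hlam_pos hlam_le
  rcases N with _ | _ | M
  · simpa using zero_le_one.trans hone
  · rwa [zero_add, Icc_self, sum_singleton, norm_exp_I_mul_ofReal]
  simp only [Nat.add_sub_cancel] at hmono hgap
  refine (norm_sum_exp_I_mul_le_of_gap_monotone φ M.succ_pos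
    (fun n h1 h2 => ⟨by linarith [hgap n h1 h2], by linarith [hgap n h1 h2]⟩)
    (fun n h1 h2 => by simpa using hmono (n + 1) (by omega) h2)).trans ?_
  obtain ⟨hfirst_lo, hfirst_hi⟩ := hgap 1 le_rfl (by omega)
  obtain ⟨hlast_lo, hlast_hi⟩ := hgap (M + 1) (by omega) le_rfl
  have hfirst : Real.cot ((φ 2 - φ 1) / 4) ≤ Real.cot (lam / 4) :=
    Real.cot_le_cot_of_le (by positivity) (by linarith) (by linarith)
  have hlast : Real.tan ((φ (M + 1 + 1) - φ (M + 1)) / 4) ≤ Real.cot (lam / 4) := by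
    rw [Real.cot_eq_tan_pi_div_two_sub]
    exact Real.strictMonoOn_tan.monotoneOn ⟨by linarith, by linarith⟩ ⟨by linarith, by linarith⟩
      (by linarith)
  linarith

/-- **Kusmin–Landau inequality.** If the gaps `δ n = φ (n+1) - φ n` of the real phases
`φ 1, …, φ N` are increasing and each lies in `[λ, 2π - λ]` for some `0 < λ ≤ π`, then
`|∑_{n=1}^N e^{i φ n}| ≤ cot (λ/4)`. -/
theorem kusmin_landau (N : ℕ) (hN : 1 ≤ N) (φ : ℕ → ℝ) (lam : ℝ)
    (hlam_pos : 0 < lam) (hlam_le : lam ≤ Real.pi)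
    (hmono : ∀ n, 2 ≤ n → n ≤ N - 1 → φ n - φ (n - 1) ≤ φ (n + 1) - φ n)
    (hgap : ∀ n, 1 ≤ n → n ≤ N - 1 →
      lam ≤ φ (n + 1) - φ n ∧ φ (n + 1) - φ n ≤ 2 * Real.pi - lam) :
    ‖∑ n ∈ Finset.Icc 1 N, Complex.exp (Complex.I * (φ n))‖ ≤
      Real.cot (lam / 4) :=
  kusmin_landau_general N φ lam hlam_pos hlam_le hmono hgap
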